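/- arXiv:2010.04515 — 2 statements merged into one kernel-verified Lean document; each statement's English description precedes it below -/
import Mathlib

section
/- Suppose A and A+E are p×p real symmetric matrices and Q = (Q1, Q2) is a p×p real orthogonal matrix, where Q1 has size p×r (1 ≤ r < p) and the column space C(Q1) is invariant for A. Set D1 = Q1ᵀAQ1 and D2 = Q2ᵀAQ2. If sep(D1,D2) > 0 and ‖E‖₂ ≤ sep(D1,D2)/5, then there exists a p×r real matrix Q̂1 with orthonormal columns (Q̂1ᵀQ̂1 = I_r) whose column space C(Q̂1) is invariant for A+E and such that M(C(Q1), C(Q̂1)) ≤ 4√2·‖E‖₂ / sep(D1,D2). -/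
open Matrix

/-- Spectral (ℓ²-operator) norm of a real matrix. -/
noncomputable def specNorm {m n : ℕ} (M : Matrix (Fin m) (Fin n) ℝ) : ℝ :=
  ‖LinearMap.toContinuousLinearMap (Matrix.toEuclideanLin M)‖

/-- `μ` is an eigenvalue of the real matrix `S`. -/
def IsEigenvalue {n : ℕ} (S : Matrix (Fin n) (Fin n) ℝ) (μ : ℝ) : Prop :=
  ∃ v : Fin n → ℝ, v ≠ 0 ∧ S.mulVec v = μ • v

/-- Eigenvalue separation `sep(D1, D2) = min { |μ - ν| : μ ∈ l(D1), ν ∈ l(D2) }`. -/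
noncomputable def sep {m n : ℕ} (D1 : Matrix (Fin m) (Fin m) ℝ)
    (D2 : Matrix (Fin n) (Fin n) ℝ) : ℝ :=
  sInf {d : ℝ | ∃ μ ν : ℝ, IsEigenvalue D1 μ ∧ IsEigenvalue D2 ν ∧ d = |μ - ν|}

/-- The column space of `B` is an invariant subspace for `A`. -/
def InvariantColSpace {p r : ℕ} (A : Matrix (Fin p) (Fin p) ℝ)
    (B : Matrix (Fin p) (Fin r) ℝ) : Prop :=
  ∀ v ∈ LinearMap.range B.mulVecLin, A.mulVec v ∈ LinearMap.range B.mulVecLin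

/-- The distance `M(C(B1), C(B2)) = sqrt(1 - (1/r) tr(B1 B1ᵀ B2 B2ᵀ))` between the
column spaces of two half-orthogonal `p × r` matrices. -/
noncomputable def Mdist {p r : ℕ} (B1 B2 : Matrix (Fin p) (Fin r) ℝ) : ℝ :=
  Real.sqrt (1 - (1 / (r : ℝ)) * (B1 * B1ᵀ * B2 * B2ᵀ).trace)

/-!
Diagonalise `A` in an orthonormal eigenbasis `[U1 U2]` adapted to `C(Q1) ⊕ C(Q2)`, so that the
eigenvalues `d1` of `D1` and `d2` of `D2` are `δ = sep(D1, D2)`-separated, and diagonalise `A + E`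
in an orthonormal eigenbasis `W` with eigenvalues `e`. By Weyl's inequality the spectra of `A` and
`A + E` can be matched with errors at most `ε = ‖E‖₂`; `Q̂1` consists of the columns of `W` matched
with `d1`, so every other eigenvalue of `A + E` lies at distance at least `δ - ε` from each `d1 a`.
Since `Wᵀ E U1 = diag(e) Wᵀ U1 - Wᵀ U1 diag(d1)` has columns of norm at most `ε`, each column of
`U1` has squared mass at most `(ε / (δ - ε))²` outside `C(Q̂1)` (Davis–Kahan), which gives
`M(C(Q1), C(Q̂1)) ≤ ε / (δ - ε) ≤ 4√2 ε / δ`.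
-/

open Finset

theorem exists_equiv_fin_monotone {α ι : Type*} [LinearOrder α] [Fintype ι] (f : ι → α) {k : ℕ}
    (hk : Fintype.card ι = k) : ∃ σ : Fin k ≃ ι, Monotone (f ∘ σ) :=
  let τ := (Fintype.equivFinOfCardEq hk).symm
  ⟨(Tuple.sort (f ∘ τ)).trans τ, Tuple.monotone_sort (f ∘ τ)⟩

namespace Matrix

section OrthEigenbasis

variable {n m m' : Type*} [Fintype n] [DecidableEq n] [Fintype m] [DecidableEq m]
  [Fintype m'] [DecidableEq m']

structure IsOrthEigenbasis (M : Matrix n n ℝ) (U : Matrix n m ℝ) (d : m → ℝ) : Prop where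
  mul_transpose : U * Uᵀ = 1
  transpose_mul : Uᵀ * U = 1
  mul_eq_mul_diagonal : M * U = U * diagonal d

theorem IsSymm.exists_isOrthEigenbasis {M : Matrix n n ℝ} (hM : M.IsSymm) :
    ∃ (U : Matrix n n ℝ) (d : n → ℝ), IsOrthEigenbasis M U d := by
  have hH : M.IsHermitian := isHermitian_iff_isSymm.mpr hM
  set U : Matrix n n ℝ := (hH.eigenvectorUnitary : Matrix n n ℝ)
  have hU : star U * U = 1 ∧ U * star U = 1 :=
    ⟨Unitary.coe_star_mul_self _, Unitary.coe_mul_star_self _⟩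
  simp only [star_eq_conjTranspose, conjTranspose_eq_transpose_of_trivial] at hU
  refine ⟨U, hH.eigenvalues, hU.2, hU.1, ?_⟩
  conv_lhs => rw [hH.spectral_theorem]
  simp [Unitary.conjStarAlgAut_apply, U, Matrix.mul_assoc]

namespace IsOrthEigenbasis

variable {M : Matrix n n ℝ} {U : Matrix n m ℝ} {d : m → ℝ}

theorem card_eq (h : IsOrthEigenbasis M U d) : Fintype.card m = Fintype.card n := by
  have := congrArg trace h.transpose_mul
  rw [trace_mul_comm, h.mul_transpose, trace_one, trace_one] at this
  exact_mod_cast this.symm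

theorem transpose_mul_eq_diagonal_mul (h : IsOrthEigenbasis M U d) (hM : M.IsSymm) :
    Uᵀ * M = diagonal d * Uᵀ := by
  simpa [Matrix.transpose_mul, hM.eq] using congrArg transpose h.mul_eq_mul_diagonal

theorem mul_submatrix_eq (h : IsOrthEigenbasis M U d) (κ : m' → m) :
    M * U.submatrix id κ = U.submatrix id κ * diagonal (d ∘ κ) := by
  ext i j
  have := congrFun (congrFun h.mul_eq_mul_diagonal i) (κ j)
  rw [mul_apply, mul_diagonal] at this
  rw [mul_apply, mul_diagonal]
  exact this

theorem transpose_mul_submatrix {k : Type*} [DecidableEq k] (h : IsOrthEigenbasis M U d)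
    (κ : k ↪ m) :
    (U.submatrix id κ)ᵀ * U.submatrix id κ = 1 := by
  rw [transpose_submatrix, ← submatrix_mul _ _ _ _ _ Function.bijective_id, h.transpose_mul,
    submatrix_one_embedding]

theorem reindex (h : IsOrthEigenbasis M U d) (e : m' ≃ m) :
    IsOrthEigenbasis M (U.submatrix id e) (d ∘ e) where
  mul_transpose := by
    rw [transpose_submatrix, submatrix_mul_equiv, h.mul_transpose, submatrix_id_id]
  transpose_mul := h.transpose_mul_submatrix e.toEmbedding
  mul_eq_mul_diagonal := h.mul_submatrix_eq e

theorem dotProduct_self_eq (h : IsOrthEigenbasis M U d) (v : n → ℝ) :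
    v ⬝ᵥ v = ∑ i, (Uᵀ *ᵥ v) i ^ 2 := by
  have hv : v = U *ᵥ (Uᵀ *ᵥ v) := by rw [mulVec_mulVec, h.mul_transpose, one_mulVec]
  conv_lhs => rw [hv, Matrix.dotProduct_mulVec, ← mulVec_transpose, ← hv]
  simp only [dotProduct, sq]

theorem dotProduct_mulVec_self_eq (h : IsOrthEigenbasis M U d) (v : n → ℝ) :
    v ⬝ᵥ M *ᵥ v = ∑ i, d i * (Uᵀ *ᵥ v) i ^ 2 := by
  have hv : v = U *ᵥ (Uᵀ *ᵥ v) := by rw [mulVec_mulVec, h.mul_transpose, one_mulVec]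
  have hMv : M *ᵥ v = U *ᵥ (diagonal d *ᵥ (Uᵀ *ᵥ v)) := by
    conv_lhs => rw [hv]
    rw [mulVec_mulVec, h.mul_eq_mul_diagonal, ← mulVec_mulVec]
  rw [hMv, Matrix.dotProduct_mulVec, ← mulVec_transpose]
  simp only [dotProduct, mulVec_diagonal]
  exact sum_congr rfl fun i _ => by ring

theorem dotProduct_mulVec_self_le (h : IsOrthEigenbasis M U d) {α : ℝ} {v : n → ℝ}
    (hv : ∀ i, α < d i → (Uᵀ *ᵥ v) i = 0) : v ⬝ᵥ M *ᵥ v ≤ α * (v ⬝ᵥ v) := by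
  rw [h.dotProduct_mulVec_self_eq, h.dotProduct_self_eq, mul_sum]
  refine sum_le_sum fun i _ => ?_
  rcases le_or_gt (d i) α with hi | hi
  · exact mul_le_mul_of_nonneg_right hi (sq_nonneg _)
  · simp [hv i hi]

theorem le_dotProduct_mulVec_self (h : IsOrthEigenbasis M U d) {β : ℝ} {v : n → ℝ}
    (hv : ∀ i, d i < β → (Uᵀ *ᵥ v) i = 0) : β * (v ⬝ᵥ v) ≤ v ⬝ᵥ M *ᵥ v := by
  rw [h.dotProduct_mulVec_self_eq, h.dotProduct_self_eq, mul_sum]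
  refine sum_le_sum fun i _ => ?_
  rcases le_or_gt β (d i) with hi | hi
  · exact mul_le_mul_of_nonneg_right hi (sq_nonneg _)
  · simp [hv i hi]

/-- The eigenvectors of `B` with eigenvalue `≥ β` and those of `A` with eigenvalue `≤ α` span
subspaces meeting only in `0`: on the intersection `β ‖v‖² ≤ ⟪v, B v⟫ ≤ (α + c) ‖v‖²`. -/
theorem card_filter_add_card_filter_le {A B : Matrix n n ℝ} {W : Matrix n m' ℝ} {e : m' → ℝ}
    (hU : IsOrthEigenbasis A U d) (hW : IsOrthEigenbasis B W e) {α β c : ℝ}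
    (hAB : ∀ v, v ⬝ᵥ B *ᵥ v ≤ v ⬝ᵥ A *ᵥ v + c * (v ⬝ᵥ v)) (hαβ : α + c < β) :
    #{j | β ≤ e j} + #{i | d i ≤ α} ≤ Fintype.card n := by
  by_contra hlt
  let ψ : (n → ℝ) →ₗ[ℝ] ({j // ¬β ≤ e j} → ℝ) × ({i // ¬d i ≤ α} → ℝ) :=
    ((LinearMap.funLeft ℝ ℝ Subtype.val).comp Wᵀ.mulVecLin).prod
      ((LinearMap.funLeft ℝ ℝ Subtype.val).comp Uᵀ.mulVecLin)
  have hdim : Module.finrank ℝ (({j // ¬β ≤ e j} → ℝ) × ({i // ¬d i ≤ α} → ℝ)) <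
      Module.finrank ℝ (n → ℝ) := by
    simp only [Module.finrank_prod, Module.finrank_fintype_fun_eq_card, Fintype.card_subtype]
    have := card_filter_add_card_filter_not (s := univ) fun j => β ≤ e j
    have := card_filter_add_card_filter_not (s := univ) fun i => d i ≤ α
    have := hU.card_eq
    have := hW.card_eq
    simp only [card_univ] at *
    omega
  obtain ⟨v, hv, hv0⟩ :=
    Submodule.exists_mem_ne_zero_of_ne_bot (LinearMap.ker_ne_bot_of_finrank_lt (f := ψ) hdim)
  rw [LinearMap.mem_ker] at hv
  have hpos : 0 < v ⬝ᵥ v := lt_of_le_of_ne (sum_nonneg fun i _ => mul_self_nonneg (v i))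
    (Ne.symm (mt dotProduct_self_eq_zero.mp hv0))
  have hB := hW.le_dotProduct_mulVec_self (β := β) (v := v) fun j hj =>
    congrFun (congrArg Prod.fst hv) ⟨j, not_le.mpr hj⟩
  have hA := hU.dotProduct_mulVec_self_le (α := α) (v := v) fun i hi =>
    congrFun (congrArg Prod.snd hv) ⟨i, not_le.mpr hi⟩
  nlinarith [hAB v]

/-- One half of Weyl's inequality, for increasingly ordered eigenvalues. -/
theorem le_add_of_monotone {ι : Type*} [Fintype ι] [DecidableEq ι] [LinearOrder ι]
    {A B : Matrix n n ℝ} {U W : Matrix n ι ℝ} {d e : ι → ℝ}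
    (hU : IsOrthEigenbasis A U d) (hW : IsOrthEigenbasis B W e) (hd : Monotone d)
    (he : Monotone e) {c : ℝ} (hAB : ∀ v, v ⬝ᵥ B *ᵥ v ≤ v ⬝ᵥ A *ᵥ v + c * (v ⬝ᵥ v)) (k : ι) :
    e k ≤ d k + c := by
  by_contra! hk
  have hcard := hU.card_filter_add_card_filter_le hW hAB hk
  have hge : #{j | k ≤ j} ≤ #{j | e k ≤ e j} := card_le_card fun j hj => by
    simp only [mem_filter, mem_univ, true_and] at hj ⊢
    exact he hj
  have hle : #{i | i ≤ k} ≤ #{i | d i ≤ d k} := card_le_card fun i hi => by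
    simp only [mem_filter, mem_univ, true_and] at hi ⊢
    exact hd hi
  have hsplit : #{j | k ≤ j} + #{i | i ≤ k} = Fintype.card ι + 1 := by
    rw [← card_union_add_card_inter, ← card_univ, ← card_singleton k]
    congr 2
    · ext j; simp [le_total]
    · ext j; simp [le_antisymm_iff, and_comm]
  have := hU.card_eq
  omega

theorem exists_equiv_abs_sub_le {A E : Matrix n n ℝ} {W : Matrix n m' ℝ} {e : m' → ℝ}
    (hU : IsOrthEigenbasis A U d) (hW : IsOrthEigenbasis (A + E) W e) {ε : ℝ}
    (hE : ∀ v, |v ⬝ᵥ E *ᵥ v| ≤ ε * (v ⬝ᵥ v)) :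
    ∃ π : m ≃ m', ∀ i, |e (π i) - d i| ≤ ε := by
  obtain ⟨σ, hσ⟩ := exists_equiv_fin_monotone d hU.card_eq
  obtain ⟨τ, hτ⟩ := exists_equiv_fin_monotone e hW.card_eq
  have hform : ∀ v, v ⬝ᵥ (A + E) *ᵥ v = v ⬝ᵥ A *ᵥ v + v ⬝ᵥ E *ᵥ v := fun v => by
    rw [add_mulVec, dotProduct_add]
  refine ⟨σ.symm.trans τ, fun i => ?_⟩
  obtain ⟨k, rfl⟩ := σ.surjective i
  simp only [Equiv.trans_apply, Equiv.symm_apply_apply]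
  rw [abs_sub_le_iff, sub_le_iff_le_add', sub_le_iff_le_add']
  constructor
  · refine (hU.reindex σ).le_add_of_monotone (hW.reindex τ) hσ hτ (fun v => ?_) k
    linarith [hform v, (abs_le.mp (hE v)).2]
  · refine (hW.reindex τ).le_add_of_monotone (hU.reindex σ) hτ hσ (fun v => ?_) k
    linarith [hform v, (abs_le.mp (hE v)).1]

/-- The Davis–Kahan `sin θ` argument: `Wᵀ E U` has entries `(e j - d a) (Wᵀ U) j a`, and each of
its columns has norm at most `ε`. -/
theorem sum_sq_le_of_le_abs_sub {A E : Matrix n n ℝ} {W : Matrix n m' ℝ} {e : m' → ℝ}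
    (hW : IsOrthEigenbasis (A + E) W e) (hAE : (A + E).IsSymm) (hU : Uᵀ * U = 1)
    (hAU : A * U = U * diagonal d) {ε γ : ℝ} (hγ : 0 < γ)
    (hE : ∀ v, E *ᵥ v ⬝ᵥ E *ᵥ v ≤ ε ^ 2 * (v ⬝ᵥ v)) {J : Finset m'} {a : m}
    (hgap : ∀ j ∉ J, γ ≤ |e j - d a|) :
    ∑ j ∈ Jᶜ, (Wᵀ * U) j a ^ 2 ≤ (ε / γ) ^ 2 := by
  set u : n → ℝ := fun k => U k a
  have hY : Wᵀ * E * U = diagonal e * (Wᵀ * U) - Wᵀ * U * diagonal d := by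
    rw [← Matrix.mul_assoc (diagonal e), ← hW.transpose_mul_eq_diagonal_mul hAE,
      Matrix.mul_assoc Wᵀ U, ← hAU, ← Matrix.mul_assoc, ← Matrix.sub_mul, ← Matrix.mul_sub,
      add_sub_cancel_left]
  have hentry : ∀ j, (Wᵀ *ᵥ E *ᵥ u) j = (e j - d a) * (Wᵀ * U) j a := fun j => by
    rw [mulVec_mulVec]
    change (Wᵀ * E * U) j a = _
    rw [hY, sub_apply, diagonal_mul, mul_diagonal]
    ring
  have hu : u ⬝ᵥ u = 1 := by simpa [u, dotProduct, mul_apply] using congrFun (congrFun hU a) a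
  calc ∑ j ∈ Jᶜ, (Wᵀ * U) j a ^ 2 ≤ ∑ j ∈ Jᶜ, (Wᵀ *ᵥ E *ᵥ u) j ^ 2 / γ ^ 2 := by
        refine sum_le_sum fun j hj => ?_
        have hγj : γ ^ 2 ≤ (e j - d a) ^ 2 := by
          simpa only [sq_abs] using pow_le_pow_left₀ hγ.le (hgap j (mem_compl.mp hj)) 2
        rw [le_div_iff₀ (by positivity), hentry, mul_pow, mul_comm]
        exact mul_le_mul_of_nonneg_right hγj (sq_nonneg _)
    _ ≤ (E *ᵥ u ⬝ᵥ E *ᵥ u) / γ ^ 2 := by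
        rw [← sum_div, hW.dotProduct_self_eq]
        gcongr
        exact subset_univ _
    _ ≤ (ε / γ) ^ 2 := by
        rw [div_pow]
        gcongr
        simpa [hu] using hE u

theorem fromCols {A : Matrix n n ℝ} {U₁ : Matrix n m ℝ} {U₂ : Matrix n m' ℝ} {d₁ : m → ℝ}
    {d₂ : m' → ℝ} (hU₁ : U₁ᵀ * U₁ = 1) (hU₂ : U₂ᵀ * U₂ = 1) (hU₁₂ : U₁ᵀ * U₂ = 0)
    (hcompl : U₁ * U₁ᵀ + U₂ * U₂ᵀ = 1) (hAU₁ : A * U₁ = U₁ * diagonal d₁)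
    (hAU₂ : A * U₂ = U₂ * diagonal d₂) :
    IsOrthEigenbasis A (Matrix.fromCols U₁ U₂) (Sum.elim d₁ d₂) where
  mul_transpose := by rw [transpose_fromCols, fromCols_mul_fromRows, hcompl]
  transpose_mul := by
    have hU₂₁ : U₂ᵀ * U₁ = 0 := by simpa using congrArg transpose hU₁₂
    rw [transpose_fromCols, fromRows_mul_fromCols, hU₁, hU₂, hU₁₂, hU₂₁, fromBlocks_one]
  mul_eq_mul_diagonal := by
    rw [mul_fromCols, hAU₁, hAU₂, ← fromBlocks_diagonal, fromCols_mul_fromBlocks]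
    simp

end IsOrthEigenbasis

end OrthEigenbasis

theorem IsOrthEigenbasis.mul_left {n k : Type*} [Fintype n] [Fintype k] [DecidableEq k]
    {A : Matrix n n ℝ} {Q : Matrix n k ℝ} {D V : Matrix k k ℝ} {d : k → ℝ}
    (hV : IsOrthEigenbasis D V d) (hQ : Qᵀ * Q = 1) (hAQ : A * Q = Q * D) :
    (Q * V)ᵀ * (Q * V) = 1 ∧ Q * V * (Q * V)ᵀ = Q * Qᵀ ∧ A * (Q * V) = Q * V * diagonal d := by
  refine ⟨?_, ?_, ?_⟩
  · rw [Matrix.transpose_mul, Matrix.mul_assoc, ← Matrix.mul_assoc Qᵀ, hQ, Matrix.one_mul,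
      hV.transpose_mul]
  · rw [Matrix.transpose_mul, Matrix.mul_assoc, ← Matrix.mul_assoc V, hV.mul_transpose,
      Matrix.one_mul]
  · rw [← Matrix.mul_assoc, hAQ, Matrix.mul_assoc, hV.mul_eq_mul_diagonal, Matrix.mul_assoc]

theorem IsOrthEigenbasis.isEigenvalue {k : ℕ} {m : Type*} [Fintype m] [DecidableEq m]
    {M : Matrix (Fin k) (Fin k) ℝ} {U : Matrix (Fin k) m ℝ} {d : m → ℝ}
    (h : IsOrthEigenbasis M U d) (i : m) : IsEigenvalue M (d i) := by
  refine ⟨fun j => U j i, fun h0 => ?_, ?_⟩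
  · have := congrFun (congrFun h.transpose_mul i) i
    simp only [mul_apply, transpose_apply, one_apply_eq] at this
    simp [funext_iff.mp h0] at this
  · ext j
    rw [Pi.smul_apply, smul_eq_mul, mul_comm, ← mul_diagonal]
    exact congrFun (congrFun h.mul_eq_mul_diagonal j) i

theorem mul_transpose_add_mul_transpose_eq_one {p r s : ℕ} (hp : r + s = p)
    {Q1 : Matrix (Fin p) (Fin r) ℝ} {Q2 : Matrix (Fin p) (Fin s) ℝ} (hQ1 : Q1ᵀ * Q1 = 1)
    (hQ2 : Q2ᵀ * Q2 = 1) (hQ12 : Q1ᵀ * Q2 = 0) : Q1 * Q1ᵀ + Q2 * Q2ᵀ = 1 := by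
  have hQ21 : Q2ᵀ * Q1 = 0 := by simpa using congrArg transpose hQ12
  have hQ : (fromCols Q1 Q2)ᵀ * fromCols Q1 Q2 = 1 := by
    rw [transpose_fromCols, fromRows_mul_fromCols, hQ1, hQ2, hQ12, hQ21, fromBlocks_one]
  rw [← fromCols_mul_fromRows, ← transpose_fromCols,
    (mul_eq_one_comm_of_equiv (finSumFinEquiv.trans (finCongr hp))).mp hQ]

theorem IsSymm.mul_eq_of_mul_eq_of_orthogonal {p r s : ℕ} {A : Matrix (Fin p) (Fin p) ℝ}
    (hA : A.IsSymm) {Q1 : Matrix (Fin p) (Fin r) ℝ} {Q2 : Matrix (Fin p) (Fin s) ℝ}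
    {D1 : Matrix (Fin r) (Fin r) ℝ} (hcompl : Q1 * Q1ᵀ + Q2 * Q2ᵀ = 1) (hQ12 : Q1ᵀ * Q2 = 0)
    (hAQ1 : A * Q1 = Q1 * D1) : A * Q2 = Q2 * (Q2ᵀ * A * Q2) := by
  have h0 : Q1ᵀ * A * Q2 = 0 := by
    have : Q1ᵀ * A = D1ᵀ * Q1ᵀ := by
      simpa [Matrix.transpose_mul, hA.eq] using congrArg Matrix.transpose hAQ1
    rw [this, Matrix.mul_assoc, hQ12, Matrix.mul_zero]
  calc A * Q2 = (Q1 * Q1ᵀ + Q2 * Q2ᵀ) * (A * Q2) := by rw [hcompl, Matrix.one_mul]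
    _ = Q1 * (Q1ᵀ * A * Q2) + Q2 * (Q2ᵀ * A * Q2) := by simp only [Matrix.add_mul, Matrix.mul_assoc]
    _ = Q2 * (Q2ᵀ * A * Q2) := by rw [h0, Matrix.mul_zero, zero_add]

theorem trace_mul_transpose_self {m n : Type*} [Fintype m] [Fintype n] (C : Matrix m n ℝ) :
    (C * Cᵀ).trace = ∑ i, ∑ j, C i j ^ 2 := by
  simp [trace, mul_apply, sq]

end Matrix

theorem dotProduct_self_eq_norm_sq {n : ℕ} (v : Fin n → ℝ) :
    v ⬝ᵥ v = ‖(WithLp.toLp 2 v : EuclideanSpace ℝ (Fin n))‖ ^ 2 := by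
  rw [EuclideanSpace.norm_sq_eq]
  simp [dotProduct, sq]

theorem toContinuousLinearMap_toEuclideanLin_toLp {m n : ℕ} (E : Matrix (Fin m) (Fin n) ℝ)
    (v : Fin n → ℝ) :
    LinearMap.toContinuousLinearMap (toEuclideanLin E) (WithLp.toLp 2 v) =
      WithLp.toLp 2 (E *ᵥ v) := by
  simp

theorem mulVec_dotProduct_mulVec_le_specNorm_sq {m n : ℕ} (E : Matrix (Fin m) (Fin n) ℝ)
    (v : Fin n → ℝ) : E *ᵥ v ⬝ᵥ E *ᵥ v ≤ specNorm E ^ 2 * (v ⬝ᵥ v) := by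
  rw [dotProduct_self_eq_norm_sq, dotProduct_self_eq_norm_sq, ← mul_pow, specNorm,
    ← toContinuousLinearMap_toEuclideanLin_toLp]
  gcongr
  exact ContinuousLinearMap.le_opNorm _ _

theorem abs_dotProduct_mulVec_le_specNorm {n : ℕ} (E : Matrix (Fin n) (Fin n) ℝ)
    (v : Fin n → ℝ) : |v ⬝ᵥ E *ᵥ v| ≤ specNorm E * (v ⬝ᵥ v) := by
  have h := abs_real_inner_le_norm (WithLp.toLp 2 v : EuclideanSpace ℝ (Fin n))
    (WithLp.toLp 2 (E *ᵥ v))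
  rw [EuclideanSpace.inner_eq_star_dotProduct] at h
  simp only [star_trivial] at h
  rw [dotProduct_comm, dotProduct_self_eq_norm_sq, specNorm, sq, mul_left_comm]
  refine h.trans (mul_le_mul_of_nonneg_left ?_ (norm_nonneg _))
  rw [← toContinuousLinearMap_toEuclideanLin_toLp]
  exact ContinuousLinearMap.le_opNorm _ _

theorem sep_le_abs_sub {m n : ℕ} {D1 : Matrix (Fin m) (Fin m) ℝ} {D2 : Matrix (Fin n) (Fin n) ℝ}
    {μ ν : ℝ} (hμ : IsEigenvalue D1 μ) (hν : IsEigenvalue D2 ν) : sep D1 D2 ≤ |μ - ν| :=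
  csInf_le ⟨0, by rintro _ ⟨_, _, _, _, rfl⟩; exact abs_nonneg _⟩ ⟨μ, ν, hμ, hν, rfl⟩

theorem InvariantColSpace.mul_eq_mul {p r : ℕ} {A : Matrix (Fin p) (Fin p) ℝ}
    {B : Matrix (Fin p) (Fin r) ℝ} (h : InvariantColSpace A B) (hB : Bᵀ * B = 1) :
    A * B = B * (Bᵀ * A * B) := by
  choose x hx using fun k => h (B *ᵥ Pi.single k 1) ⟨_, rfl⟩
  have hC : A * B = B * of fun i k => x k i := by
    ext i k
    have hxk := congrFun (hx k) i
    rw [mulVec_single_one] at hxk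
    simpa [mulVec, dotProduct, mul_apply] using hxk.symm
  conv_rhs => rw [Matrix.mul_assoc Bᵀ, hC, ← Matrix.mul_assoc Bᵀ B, hB, Matrix.one_mul]
  exact hC

theorem invariantColSpace_of_mul_eq {p r : ℕ} {A : Matrix (Fin p) (Fin p) ℝ}
    {B : Matrix (Fin p) (Fin r) ℝ} {C : Matrix (Fin r) (Fin r) ℝ} (h : A * B = B * C) :
    InvariantColSpace A B := by
  rintro _ ⟨x, rfl⟩
  exact ⟨C *ᵥ x, by simp [mulVec_mulVec, h]⟩

theorem InvariantColSpace.exists_isOrthEigenbasis_fromCols {p r s : ℕ} (hp : r + s = p)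
    {A : Matrix (Fin p) (Fin p) ℝ} (hA : A.IsSymm) {Q1 : Matrix (Fin p) (Fin r) ℝ}
    {Q2 : Matrix (Fin p) (Fin s) ℝ} (hQ1 : Q1ᵀ * Q1 = 1) (hQ2 : Q2ᵀ * Q2 = 1)
    (hQ12 : Q1ᵀ * Q2 = 0) (hinv : InvariantColSpace A Q1) :
    ∃ (U1 : Matrix (Fin p) (Fin r) ℝ) (U2 : Matrix (Fin p) (Fin s) ℝ) (d1 : Fin r → ℝ)
      (d2 : Fin s → ℝ), IsOrthEigenbasis A (fromCols U1 U2) (Sum.elim d1 d2) ∧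
      U1ᵀ * U1 = 1 ∧ A * U1 = U1 * diagonal d1 ∧ Q1 * Q1ᵀ = U1 * U1ᵀ ∧
      ∀ a b, sep (Q1ᵀ * A * Q1) (Q2ᵀ * A * Q2) ≤ |d1 a - d2 b| := by
  have hcompl := mul_transpose_add_mul_transpose_eq_one hp hQ1 hQ2 hQ12
  have hAQ1 := hinv.mul_eq_mul hQ1
  have hAQ2 := hA.mul_eq_of_mul_eq_of_orthogonal hcompl hQ12 hAQ1
  have hsymm : ∀ {k : ℕ} (Q : Matrix (Fin p) (Fin k) ℝ), (Qᵀ * A * Q).IsSymm := fun Q => by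
    simp [IsSymm, transpose_mul, hA.eq, Matrix.mul_assoc]
  obtain ⟨V1, d1, hV1⟩ := (hsymm Q1).exists_isOrthEigenbasis
  obtain ⟨V2, d2, hV2⟩ := (hsymm Q2).exists_isOrthEigenbasis
  obtain ⟨hU1, hU1U1, hAU1⟩ := hV1.mul_left hQ1 hAQ1
  obtain ⟨hU2, hU2U2, hAU2⟩ := hV2.mul_left hQ2 hAQ2
  have hU12 : (Q1 * V1)ᵀ * (Q2 * V2) = 0 := by
    rw [transpose_mul, Matrix.mul_assoc, ← Matrix.mul_assoc Q1ᵀ, hQ12, Matrix.zero_mul,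
      Matrix.mul_zero]
  refine ⟨Q1 * V1, Q2 * V2, d1, d2, IsOrthEigenbasis.fromCols hU1 hU2 hU12
    (by rw [hU1U1, hU2U2, hcompl]) hAU1 hAU2, hU1, hAU1, hU1U1.symm, fun a b => ?_⟩
  exact sep_le_abs_sub (hV1.isEigenvalue a) (hV2.isEigenvalue b)

theorem Mdist_submatrix_le {p r : ℕ} {m : Type*} [Fintype m] [DecidableEq m]
    {U : Matrix (Fin p) (Fin r) ℝ} {W : Matrix (Fin p) m ℝ} (hr : 0 < r) (hU : Uᵀ * U = 1)
    (hW : W * Wᵀ = 1) (κ : Fin r ↪ m) {η : ℝ} (hη : 0 ≤ η)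
    (hout : ∀ a, ∑ j ∈ (univ.map κ)ᶜ, (Wᵀ * U) j a ^ 2 ≤ η ^ 2) :
    Mdist U (W.submatrix id κ) ≤ η := by
  have hcol : ∀ a, ∑ j, (Wᵀ * U) j a ^ 2 = 1 := fun a => by
    have hX : (Wᵀ * U)ᵀ * (Wᵀ * U) = 1 := by
      rw [transpose_mul, transpose_transpose, Matrix.mul_assoc, ← Matrix.mul_assoc W, hW,
        Matrix.one_mul, hU]
    have h := congrFun (congrFun hX a) a
    simp only [mul_apply (M := (Wᵀ * U)ᵀ), transpose_apply, one_apply_eq] at h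
    simpa only [sq] using h
  have htrace : (U * Uᵀ * W.submatrix id κ * (W.submatrix id κ)ᵀ).trace =
      ∑ a, ∑ j ∈ univ.map κ, (Wᵀ * U) j a ^ 2 := by
    rw [trace_mul_comm, show (W.submatrix id κ)ᵀ * (U * Uᵀ * W.submatrix id κ) =
      (W.submatrix id κ)ᵀ * U * ((W.submatrix id κ)ᵀ * U)ᵀ by
        simp [transpose_mul, Matrix.mul_assoc], trace_mul_transpose_self, sum_comm]
    simp only [sum_map]
    rfl
  have hin : ∀ a, 1 - η ^ 2 ≤ ∑ j ∈ univ.map κ, (Wᵀ * U) j a ^ 2 := fun a => by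
    have := sum_add_sum_compl (univ.map κ) fun j => (Wᵀ * U) j a ^ 2
    linarith [hcol a, hout a]
  have hr' : (0 : ℝ) < r := by exact_mod_cast hr
  have hsum : (r : ℝ) * (1 - η ^ 2) ≤ ∑ a, ∑ j ∈ univ.map κ, (Wᵀ * U) j a ^ 2 :=
    calc (r : ℝ) * (1 - η ^ 2) = ∑ _a : Fin r, (1 - η ^ 2) := by
          rw [sum_const, card_univ, Fintype.card_fin, nsmul_eq_mul]
      _ ≤ _ := sum_le_sum fun a _ => hin a
  rw [Mdist, Real.sqrt_le_left hη, htrace, one_div, ← div_eq_inv_mul]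
  linarith [(le_div_iff₀' hr').mpr hsum]

theorem stmt_2_general (p r s : ℕ) (hr : 1 ≤ r) (hp : r + s = p)
    (A E : Matrix (Fin p) (Fin p) ℝ) (hA : A.IsSymm) (hAE : (A + E).IsSymm)
    (Q1 : Matrix (Fin p) (Fin r) ℝ) (Q2 : Matrix (Fin p) (Fin s) ℝ)
    (hQ1 : Q1ᵀ * Q1 = 1) (hQ2 : Q2ᵀ * Q2 = 1) (hQ12 : Q1ᵀ * Q2 = 0)
    (hinv : InvariantColSpace A Q1)
    (hsep : 0 < sep (Q1ᵀ * A * Q1) (Q2ᵀ * A * Q2))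
    (hE : specNorm E ≤ sep (Q1ᵀ * A * Q1) (Q2ᵀ * A * Q2) / 5) :
    ∃ Qhat1 : Matrix (Fin p) (Fin r) ℝ,
      Qhat1ᵀ * Qhat1 = 1 ∧
      InvariantColSpace (A + E) Qhat1 ∧
      Mdist Q1 Qhat1 ≤
        4 * Real.sqrt 2 * specNorm E / sep (Q1ᵀ * A * Q1) (Q2ᵀ * A * Q2) := by
  set δ := sep (Q1ᵀ * A * Q1) (Q2ᵀ * A * Q2)
  set ε := specNorm E
  have hε : 0 ≤ ε := norm_nonneg _
  obtain ⟨U1, U2, d1, d2, hU, hU1, hAU1, hQU, hd⟩ :=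
    hinv.exists_isOrthEigenbasis_fromCols hp hA hQ1 hQ2 hQ12
  obtain ⟨W, e, hW⟩ := hAE.exists_isOrthEigenbasis
  obtain ⟨π, hπ⟩ := hU.exists_equiv_abs_sub_le hW (abs_dotProduct_mulVec_le_specNorm E)
  let κ : Fin r ↪ Fin p := ⟨π ∘ Sum.inl, π.injective.comp Sum.inl_injective⟩
  have hgap : ∀ a, ∀ j ∉ univ.map κ, δ - ε ≤ |e j - d1 a| := fun a j hj => by
    obtain ⟨b, rfl⟩ : ∃ b, π (Sum.inr b) = j := by
      rcases h : π.symm j with a' | b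
      · exact absurd (mem_map.mpr ⟨a', mem_univ _, by simp [κ, ← h]⟩) hj
      · exact ⟨b, by simp [← h]⟩
    have hπb := hπ (Sum.inr b)
    simp only [Sum.elim_inr] at hπb
    linarith [hd a b, abs_sub_le (d1 a) (e (π (Sum.inr b))) (d2 b),
      abs_sub_comm (d1 a) (e (π (Sum.inr b)))]
  refine ⟨W.submatrix id κ, hW.transpose_mul_submatrix κ,
    invariantColSpace_of_mul_eq (hW.mul_submatrix_eq κ), ?_⟩
  calc Mdist Q1 (W.submatrix id κ) = Mdist U1 (W.submatrix id κ) := by rw [Mdist, Mdist, hQU]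
    _ ≤ ε / (δ - ε) := Mdist_submatrix_le hr hU1 hW.mul_transpose κ (div_nonneg hε (by linarith))
        fun a => hW.sum_sq_le_of_le_abs_sub hAE hU1 hAU1 (by linarith)
          (mulVec_dotProduct_mulVec_le_specNorm_sq E) (hgap a)
    _ ≤ 4 * Real.sqrt 2 * ε / δ := by
        rw [div_le_div_iff₀ (by linarith) hsep]
        nlinarith [Real.one_lt_sqrt_two, mul_nonneg hε (by linarith : (0 : ℝ) ≤ δ - ε)]

theorem stmt_2 (p r s : ℕ) (hr : 1 ≤ r) (hs : 1 ≤ s) (hp : r + s = p)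
    (A E : Matrix (Fin p) (Fin p) ℝ) (hA : A.IsSymm) (hAE : (A + E).IsSymm)
    (Q1 : Matrix (Fin p) (Fin r) ℝ) (Q2 : Matrix (Fin p) (Fin s) ℝ)
    (hQ1 : Q1ᵀ * Q1 = 1) (hQ2 : Q2ᵀ * Q2 = 1) (hQ12 : Q1ᵀ * Q2 = 0)
    (hinv : InvariantColSpace A Q1)
    (hsep : 0 < sep (Q1ᵀ * A * Q1) (Q2ᵀ * A * Q2))
    (hE : specNorm E ≤ sep (Q1ᵀ * A * Q1) (Q2ᵀ * A * Q2) / 5) :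
    ∃ Qhat1 : Matrix (Fin p) (Fin r) ℝ,
      Qhat1ᵀ * Qhat1 = 1 ∧
      InvariantColSpace (A + E) Qhat1 ∧
      Mdist Q1 Qhat1 ≤
        4 * Real.sqrt 2 * specNorm E / sep (Q1ᵀ * A * Q1) (Q2ᵀ * A * Q2) :=
  stmt_2_general p r s hr hp A E hA hAE Q1 Q2 hQ1 hQ2 hQ12 hinv hsep hE
end

section
/- Let B1 and B2 be real p×r half-orthogonal matrices (B1ᵀB1 = B2ᵀB2 = I_r, 1 ≤ r ≤ p). Then M(C(B1),C(B2))² ≤ 2·‖B1 − B2‖₂², where ‖·‖₂ is the spectral (ℓ²-operator) norm; in particular M(C(B1),C(B2)) ≤ √2·‖B1 − B2‖₂. -/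
open Matrix

lemma trace_transpose_mul_self_nonneg {a b : ℕ} (M : Matrix (Fin a) (Fin b) ℝ) :
    0 ≤ (Mᵀ * M).trace := by
  rw [Matrix.trace]
  apply Finset.sum_nonneg
  intro j _
  simp only [Matrix.diag_apply, Matrix.mul_apply, Matrix.transpose_apply]
  apply Finset.sum_nonneg
  intro i _
  exact mul_self_nonneg _

lemma col_norm_sq_le {a b : ℕ} (M : Matrix (Fin a) (Fin b) ℝ) (j : Fin b) :
    ∑ i, M i j ^ 2 ≤ specNorm M ^ 2 := by
  set f := LinearMap.toContinuousLinearMap (Matrix.toEuclideanLin M)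
  set v : EuclideanSpace ℝ (Fin b) := EuclideanSpace.single j (1 : ℝ)
  have hv : ‖v‖ = 1 := by simp [v]
  have hfv : ‖f v‖ ≤ specNorm M := by
    calc ‖f v‖ ≤ ‖f‖ * ‖v‖ := f.le_opNorm v
    _ = specNorm M := by rw [hv, mul_one]; rfl
  have hfv2 : ‖f v‖ ^ 2 = ∑ i, M i j ^ 2 := by
    have : f v = (WithLp.equiv 2 (Fin a → ℝ)).symm (M *ᵥ Pi.single j 1) := by
      show Matrix.toEuclideanLin M v = _
      rw [Matrix.toEuclideanLin_apply]
      congr 1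
    rw [this, EuclideanSpace.norm_eq, Real.sq_sqrt (by positivity)]
    congr 1
    ext i
    simp [Real.norm_eq_abs, sq_abs]
  rw [← hfv2]
  have h0 : (0:ℝ) ≤ ‖f v‖ := norm_nonneg _
  exact pow_le_pow_left₀ h0 hfv 2

theorem stmt_8 (p r : ℕ) (hr : 1 ≤ r) (hrp : r ≤ p)
    (B1 B2 : Matrix (Fin p) (Fin r) ℝ)
    (hB1 : B1ᵀ * B1 = 1) (hB2 : B2ᵀ * B2 = 1) :
    (Mdist B1 B2) ^ 2 ≤ 2 * specNorm (B1 - B2) ^ 2 ∧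
    Mdist B1 B2 ≤ Real.sqrt 2 * specNorm (B1 - B2) := by
  have hrpos : (0:ℝ) < r := by exact_mod_cast hr
  set C : Matrix (Fin p) (Fin r) ℝ := B1 - B2 with hC
  set s : ℝ := specNorm C with hs
  have hs0 : 0 ≤ s := norm_nonneg _
  set D : Matrix (Fin r) (Fin r) ℝ := B1ᵀ * B2 with hD
  -- trace identities
  have htr1 : (B1 * B1ᵀ * B2 * B2ᵀ).trace = (Dᵀ * D).trace := by
    rw [Matrix.trace_mul_comm (B1 * B1ᵀ * B2) B2ᵀ]
    congr 1
    rw [hD, Matrix.transpose_mul, Matrix.transpose_transpose]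
    simp only [Matrix.mul_assoc]
  have htrone : (1 : Matrix (Fin r) (Fin r) ℝ).trace = (r : ℝ) := by
    simp [Matrix.trace_one]
  have htrD : (B2ᵀ * B1).trace = D.trace := by
    rw [← Matrix.trace_transpose (B2ᵀ * B1), Matrix.transpose_mul,
      Matrix.transpose_transpose, hD]
  -- tr(DᵀD) ≥ 2 tr D - r
  have h1 : 2 * D.trace - (r:ℝ) ≤ (Dᵀ * D).trace := by
    have hnn := trace_transpose_mul_self_nonneg (D - 1)
    have e : (D - 1)ᵀ * (D - 1) = Dᵀ * D - Dᵀ - D + 1 := by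
      rw [Matrix.transpose_sub, Matrix.transpose_one]
      noncomm_ring
    rw [e, Matrix.trace_add, Matrix.trace_sub, Matrix.trace_sub,
      Matrix.trace_transpose, htrone] at hnn
    linarith
  -- tr(CᵀC) = 2r - 2 tr D
  have h2 : (Cᵀ * C).trace = 2 * (r:ℝ) - 2 * D.trace := by
    have e : Cᵀ * C = (B1ᵀ * B1 - B1ᵀ * B2) - (B2ᵀ * B1 - B2ᵀ * B2) := by
      rw [hC, Matrix.transpose_sub, Matrix.sub_mul, Matrix.mul_sub, Matrix.mul_sub]
    rw [e, hB1, hB2, Matrix.trace_sub, Matrix.trace_sub, Matrix.trace_sub,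
      htrone, htrD, hD]
    ring
  -- tr(CᵀC) ≤ r * s²
  have h3 : (Cᵀ * C).trace ≤ (r:ℝ) * s ^ 2 := by
    have : (Cᵀ * C).trace = ∑ j, ∑ i, C i j ^ 2 := by
      rw [Matrix.trace]
      congr 1
      ext j
      simp [Matrix.mul_apply, sq]
    rw [this]
    calc ∑ j : Fin r, ∑ i, C i j ^ 2 ≤ ∑ j : Fin r, s ^ 2 :=
          Finset.sum_le_sum fun j _ => col_norm_sq_le C j
      _ = (r:ℝ) * s ^ 2 := by simp [mul_comm]
  -- key inequality
  have key : 1 - (1 / (r : ℝ)) * (B1 * B1ᵀ * B2 * B2ᵀ).trace ≤ 2 * s ^ 2 := by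
    rw [htr1]
    have hle : (r:ℝ) - (Dᵀ * D).trace ≤ (r:ℝ) * s ^ 2 := by linarith
    have heq : 1 - (1 / (r : ℝ)) * (Dᵀ * D).trace = ((r:ℝ) - (Dᵀ * D).trace) / r := by
      field_simp
    rw [heq, div_le_iff₀ hrpos]
    nlinarith [sq_nonneg s]
  have h2s : (0:ℝ) ≤ 2 * s ^ 2 := by positivity
  have hMle : Mdist B1 B2 ≤ Real.sqrt (2 * s ^ 2) := by
    rw [Mdist]
    exact Real.sqrt_le_sqrt key
  have hsqrt : Real.sqrt (2 * s ^ 2) = Real.sqrt 2 * s := by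
    rw [Real.sqrt_mul (by norm_num), Real.sqrt_sq hs0]
  constructor
  · have := pow_le_pow_left₀ (Real.sqrt_nonneg _) hMle 2
    rwa [Real.sq_sqrt h2s] at this
  · rwa [hsqrt] at hMle
end
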